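/- arXiv:1912.05346 — 2 statements merged into one kernel-verified Lean document; each statement's English description precedes it below -/
import Mathlib

section
/- With the hypotheses above, the family {g_0} ∪ {g_n : n ≥ 1} (with g_0 = α/ρ_eq and g_n = c_n f_n') is complete in L²((-H,0), ρ_eq dz): if f ∈ L²((-H,0), ρ_eq dz) satisfies (f, g_n)_{L²_{ρ_eq}} = 0 for all n ≥ 0, then f = 0. Key steps: (f,g_0)=0 gives ∫_{-H}^0 f = 0; setting F(z) = ∫_{-H}^z f, one has F(-H)=F(0)=0 and (F, f_n)_{L²(ρ_eq N²)} = 0 for all n ≥ 1, hence F = 0 and f = 0. -/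
/-!
Orthogonality to `g₀ = α / ρ` says that `u` has mean zero, so its primitive `F` vanishes at both
ends of `[-H, 0]`. Testing the Sturm–Liouville equation `(ρ fₙ')' = -(ρ N² / cₙ²) fₙ` against `F`
and integrating by parts moves the derivative onto `F`, which turns the orthogonality of `u` to
`gₙ = cₙ fₙ'` in `L²(ρ)` into the orthogonality of `F` to `fₙ` in `L²(ρ N²)`. Completeness of the
`fₙ` gives `F = 0`, hence `u = F' = 0`.
-/

open MeasureTheory intervalIntegral Set

theorem eqOn_zero_of_primitive_eqOn_zero {a b : ℝ} {u : ℝ → ℝ} (hab : a < b) (hu : Continuous u)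
    (hF : ∀ z ∈ Icc a b, ∫ t in a..z, u t = 0) : ∀ z ∈ Icc a b, u z = 0 := by
  have hIoo : EqOn u 0 (Ioo a b) := fun z hz => by
    have hF0 : (fun w => ∫ t in a..w, u t) =ᶠ[nhds z] fun _ => (0 : ℝ) :=
      Filter.eventuallyEq_of_mem (Ioo_mem_nhds hz.1 hz.2) fun w hw => hF w (Ioo_subset_Icc_self hw)
    exact (hu.integral_hasStrictDerivAt a z).hasDerivAt.unique
      ((hasDerivAt_const z 0).congr_of_eventuallyEq hF0)
  rw [← closure_Ioo hab.ne]
  exact hIoo.closure hu continuous_const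

theorem intervalIntegrable_of_abs_le_on_Ioo {a b C : ℝ} {h : ℝ → ℝ} (hab : a ≤ b)
    (hh : AEStronglyMeasurable h) (hC : ∀ z ∈ Ioo a b, |h z| ≤ C) :
    IntervalIntegrable h volume a b := by
  rw [intervalIntegrable_iff_integrableOn_Ioo_of_le hab]
  exact Measure.integrableOn_of_bounded measure_Ioo_lt_top.ne hh
    ((ae_restrict_iff' measurableSet_Ioo).2 (.of_forall hC))

section SturmLiouville

variable {a b g c : ℝ} {K : NNReal} {ρ N2 f : ℝ → ℝ}

theorem intervalIntegrable_deriv_mul_deriv_of_sturmLiouville (hab : a ≤ b)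
    (hρ : LipschitzOnWith K ρ (Icc a b))
    (hρN2 : ∀ z ∈ Icc a b, ρ z * N2 z = -g * deriv ρ z) (hf : Continuous f)
    (hSL : ∀ z ∈ Ioo a b,
      deriv (fun y => ρ y * deriv f y) z + ρ z * N2 z / c ^ 2 * f z = 0) :
    IntervalIntegrable (deriv fun y => ρ y * deriv f y) volume a b := by
  obtain ⟨M, hM⟩ := isCompact_Icc.exists_bound_of_continuousOn hf.continuousOn (s := Icc a b)
  refine intervalIntegrable_of_abs_le_on_Ioo hab (measurable_deriv _).aestronglyMeasurable
    (C := |g| * K / c ^ 2 * M) fun z hz => ?_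
  have hzI : z ∈ Icc a b := Ioo_subset_Icc_self hz
  have hρ' : |deriv ρ z| ≤ K := norm_deriv_le_of_lipschitzOn (Icc_mem_nhds hz.1 hz.2) hρ
  have hfz : |f z| ≤ M := hM z hzI
  calc |deriv (fun y => ρ y * deriv f y) z|
      = |g| * |deriv ρ z| / c ^ 2 * |f z| := by
        rw [eq_neg_of_add_eq_zero_left (hSL z hz), hρN2 z hzI]
        simp only [abs_neg, abs_mul, abs_div, abs_pow, sq_abs]
    _ ≤ |g| * K / c ^ 2 * M := by gcongr

theorem integral_primitive_mul_eigenfunction (hab : a ≤ b) (hρ : LipschitzOnWith K ρ (Icc a b))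
    (hρdiff : ∀ z ∈ Ioo a b, DifferentiableAt ℝ ρ z)
    (hρN2 : ∀ z ∈ Icc a b, ρ z * N2 z = -g * deriv ρ z) (hf : ContDiff ℝ 2 f) (hc : c ≠ 0)
    (hSL : ∀ z ∈ Ioo a b,
      deriv (fun y => ρ y * deriv f y) z + ρ z * N2 z / c ^ 2 * f z = 0)
    {u : ℝ → ℝ} (hu : Continuous u) (hmean : ∫ t in a..b, u t = 0) :
    ∫ z in a..b, (∫ t in a..z, u t) * f z * (ρ z * N2 z)
      = c ^ 2 * ∫ z in a..b, u z * (ρ z * deriv f z) := by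
  set φ := fun y => ρ y * deriv f y
  have hφ : ContinuousOn φ (Icc a b) :=
    hρ.continuousOn.mul hf.differentiable_deriv_two.continuous.continuousOn
  have hIBP := integral_mul_deriv_eq_deriv_mul_of_hasDerivAt (u := fun z => ∫ t in a..z, u t)
    (v := φ) (continuous_primitive (fun _ _ => hu.intervalIntegrable _ _) a).continuousOn
    (by rwa [uIcc_of_le hab]) (fun z _ => (hu.integral_hasStrictDerivAt a z).hasDerivAt)
    (fun z hz => by
      rw [min_eq_left hab, max_eq_right hab] at hz
      exact ((hρdiff z hz).mul (hf.differentiable_deriv_two z)).hasDerivAt)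
    (hu.intervalIntegrable a b)
    (intervalIntegrable_deriv_mul_deriv_of_sturmLiouville hab hρ hρN2 hf.continuous hSL)
  rw [integral_same, hmean, zero_mul, zero_mul, sub_self, zero_sub] at hIBP
  calc ∫ z in a..b, (∫ t in a..z, u t) * f z * (ρ z * N2 z)
      = ∫ z in a..b, -c ^ 2 * ((∫ t in a..z, u t) * deriv φ z) :=
        integral_congr_Ioo_of_le hab fun z hz => by
          rw [eq_neg_of_add_eq_zero_left (hSL z hz)]
          field_simp
    _ = c ^ 2 * ∫ z in a..b, u z * φ z := by
        rw [intervalIntegral.integral_const_mul, hIBP]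
        ring

end SturmLiouville

theorem g_family_complete_general
    (H g : ℝ) (hH : 0 < H)
    (ρ : ℝ → ℝ) (K : NNReal) (hρLip : LipschitzOnWith K ρ (Set.Icc (-H) 0))
    (ρmin : ℝ) (hρmin : 0 < ρmin) (hρlow : ∀ z ∈ Set.Icc (-H) 0, ρmin ≤ ρ z)
    (N2 : ℝ → ℝ) (hN2def : ∀ z ∈ Set.Icc (-H) 0, N2 z = -g * deriv ρ z / ρ z)
    (N0 : ℝ) (hN0 : 0 < N0) (hN2low : ∀ z ∈ Set.Icc (-H) 0, N0 ≤ N2 z)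
    (f : ℕ → ℝ → ℝ) (c : ℕ → ℝ) (hc : ∀ n, 1 ≤ n → 0 < c n)
    (hreg : ∀ n, 1 ≤ n → ContDiff ℝ 2 (f n))
    (hSL : ∀ n, 1 ≤ n → ∀ z ∈ Set.Ioo (-H) 0,
      deriv (fun y => ρ y * deriv (f n) y) z + ρ z * N2 z / (c n) ^ 2 * f n z = 0)
    -- `(f_n)_{n≥1}` is a (complete) orthonormal basis of `L²((-H,0), ρ_eq N² dz)`:
    (hbasis : ∀ F : ℝ → ℝ, Continuous F →
      (∀ n, 1 ≤ n → (∫ z in (-H)..0, F z * f n z * (ρ z * N2 z)) = 0) →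
      ∀ z ∈ Set.Icc (-H) 0, F z = 0)
    (α : ℝ) (hα : α = (Real.sqrt (∫ z in (-H)..0, (ρ z)⁻¹))⁻¹) :
    ∀ u : ℝ → ℝ, Continuous u →
      (∫ z in (-H)..0, u z * (α / ρ z) * ρ z) = 0 →
      (∀ n, 1 ≤ n → (∫ z in (-H)..0, u z * (c n * deriv (f n) z) * ρ z) = 0) →
      ∀ z ∈ Set.Icc (-H) 0, u z = 0 := by
  intro u hu hu0 huorth
  have hab : -H < 0 := neg_lt_zero.2 hH
  have hρpos : ∀ z ∈ Icc (-H) 0, 0 < ρ z := fun z hz => hρmin.trans_le (hρlow z hz)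
  have hρN2 : ∀ z ∈ Icc (-H) 0, ρ z * N2 z = -g * deriv ρ z := fun z hz => by
    rw [hN2def z hz]
    field_simp [(hρpos z hz).ne']
  -- Where `ρ` is not differentiable, the junk value `deriv ρ z = 0` would give `N² z = 0 < N₀`.
  have hρdiff : ∀ z ∈ Ioo (-H) 0, DifferentiableAt ℝ ρ z := fun z hz => by
    have hzI : z ∈ Icc (-H) 0 := Ioo_subset_Icc_self hz
    refine differentiableAt_of_deriv_ne_zero fun h => ?_
    have := hN2low z hzI
    rw [hN2def z hzI, h, mul_zero, zero_div] at this
    exact hN0.not_ge this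
  have hα0 : α ≠ 0 := by
    have hρinv : ContinuousOn (fun z => (ρ z)⁻¹) (Icc (-H) 0) :=
      hρLip.continuousOn.inv₀ fun z hz => (hρpos z hz).ne'
    rw [hα]
    exact inv_ne_zero <| Real.sqrt_ne_zero'.2 <|
      intervalIntegral_pos_of_pos_on (hρinv.intervalIntegrable_of_Icc hab.le)
        (fun z hz => inv_pos.2 (hρpos z (Ioo_subset_Icc_self hz))) hab
  have hmean : ∫ z in (-H)..0, u z = 0 := by
    refine (mul_eq_zero_iff_left hα0).1 ?_
    rw [← intervalIntegral.integral_const_mul]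
    refine .trans (integral_congr fun z hz => ?_) hu0
    rw [uIcc_of_le hab.le] at hz
    field_simp [(hρpos z hz).ne']
  refine eqOn_zero_of_primitive_eqOn_zero hab hu (hbasis _
    (continuous_primitive (fun _ _ => hu.intervalIntegrable _ _) _) fun n hn => ?_)
  have hweak : ∫ z in (-H)..0, u z * (ρ z * deriv (f n) z) = 0 := by
    refine (mul_eq_zero_iff_left (hc n hn).ne').1 ?_
    rw [← intervalIntegral.integral_const_mul]
    exact .trans (integral_congr fun z _ => by ring) (huorth n hn)
  rw [integral_primitive_mul_eigenfunction hab.le hρLip hρdiff hρN2 (hreg n hn) (hc n hn).ne'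
    (hSL n hn) hu hmean, hweak, mul_zero]

/-- Completeness of the family `{g_0} ∪ {g_n = c_n f_n' : n ≥ 1}` in
`L²((-H,0), ρ_eq dz)`: if `u` is orthogonal to all `g_n`, `n ≥ 0`, then `u = 0`. -/
theorem g_family_complete
    (H g : ℝ) (hH : 0 < H) (hg : 0 < g)
    (ρ : ℝ → ℝ) (K : NNReal) (hρLip : LipschitzOnWith K ρ (Set.Icc (-H) 0))
    (ρmin : ℝ) (hρmin : 0 < ρmin) (hρlow : ∀ z ∈ Set.Icc (-H) 0, ρmin ≤ ρ z)
    (N2 : ℝ → ℝ) (hN2def : ∀ z ∈ Set.Icc (-H) 0, N2 z = -g * deriv ρ z / ρ z)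
    (N0 : ℝ) (hN0 : 0 < N0) (hN2low : ∀ z ∈ Set.Icc (-H) 0, N0 ≤ N2 z)
    (f : ℕ → ℝ → ℝ) (c : ℕ → ℝ) (hc : ∀ n, 1 ≤ n → 0 < c n)
    (hreg : ∀ n, 1 ≤ n → ContDiff ℝ 2 (f n))
    (hSL : ∀ n, 1 ≤ n → ∀ z ∈ Set.Ioo (-H) 0,
      deriv (fun y => ρ y * deriv (f n) y) z + ρ z * N2 z / (c n) ^ 2 * f n z = 0)
    (hBC : ∀ n, 1 ≤ n → f n (-H) = 0 ∧ f n 0 = 0)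
    (hON : ∀ m n, 1 ≤ m → 1 ≤ n →
      (∫ z in (-H)..0, f m z * f n z * (ρ z * N2 z)) = if m = n then 1 else 0)
    -- `(f_n)_{n≥1}` is a (complete) orthonormal basis of `L²((-H,0), ρ_eq N² dz)`:
    (hbasis : ∀ F : ℝ → ℝ, Continuous F →
      (∀ n, 1 ≤ n → (∫ z in (-H)..0, F z * f n z * (ρ z * N2 z)) = 0) →
      ∀ z ∈ Set.Icc (-H) 0, F z = 0)
    (α : ℝ) (hα : α = (Real.sqrt (∫ z in (-H)..0, (ρ z)⁻¹))⁻¹) :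
    ∀ u : ℝ → ℝ, Continuous u →
      (∫ z in (-H)..0, u z * (α / ρ z) * ρ z) = 0 →
      (∀ n, 1 ≤ n → (∫ z in (-H)..0, u z * (c n * deriv (f n) z) * ρ z) = 0) →
      ∀ z ∈ Set.Icc (-H) 0, u z = 0 :=
  g_family_complete_general H g hH ρ K hρLip ρmin hρmin hρlow N2 hN2def N0 hN0 hN2low f c hc hreg
    hSL hbasis α hα
end

section
/- Let N > 0 be constant, and for δ ∈ (0,1) let ρ_{eq,δ}(z) = ρ_+ e^{-δz} - (ρ_+ - ρ_-) χ((z - z_0)/δ) on [-1,0], where ρ_+ > ρ_- > 0, z_0 ∈ (-1,0), and χ(x) = ∫_{-∞}^x α with α ∈ C_c^∞((0,1)), α ≥ 0, ∫α = 1. Let 1/c_{1,δ}² be the smallest eigenvalue of the Dirichlet Sturm–Liouville problem (ρ_{eq,δ} f')' + (g(-ρ_{eq,δ}'/ρ_{eq,δ})/c²) ρ_{eq,δ} f = 0 on (-1,0). Then, with c̄² = (ρ_+ - ρ_-) g (ρ_+/(z_0+1) + ρ_- /(-z_0))^{-1}, one has 1/c_{1,δ}² ≤ 1/c̄² + O(δ)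 as δ → 0. -/
open MeasureTheory intervalIntegral

open Set

lemma aux_hcs {α : ℝ → ℝ} (hαsupp : tsupport α ⊆ Set.Ioo 0 1) : HasCompactSupport α :=
  HasCompactSupport.of_support_subset_isCompact isCompact_Icc
    ((subset_tsupport α).trans (hαsupp.trans Ioo_subset_Icc_self))

lemma aux_int {α : ℝ → ℝ} (hαc : Continuous α) (hαsupp : tsupport α ⊆ Set.Ioo 0 1) :
    Integrable α := hαc.integrable_of_hasCompactSupport (aux_hcs hαsupp)

lemma aux_zero_nonpos {α : ℝ → ℝ} (hαsupp : tsupport α ⊆ Set.Ioo 0 1) {x : ℝ} (hx : x ≤ 0) :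
    α x = 0 :=
  image_eq_zero_of_notMem_tsupport (fun h => absurd (hαsupp h).1 (not_lt.2 hx))

lemma aux_zero_ge {α : ℝ → ℝ} (hαsupp : tsupport α ⊆ Set.Ioo 0 1) {x : ℝ} (hx : 1 ≤ x) :
    α x = 0 :=
  image_eq_zero_of_notMem_tsupport (fun h => absurd (hαsupp h).2 (not_lt.2 hx))

lemma chi_nonneg {α χ : ℝ → ℝ} (hαpos : ∀ x, 0 ≤ α x)
    (hχ : ∀ x, χ x = ∫ t in Set.Iic x, α t) (x : ℝ) : 0 ≤ χ x := by
  rw [hχ]; exact setIntegral_nonneg measurableSet_Iic (fun t _ => hαpos t)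

lemma chi_le_one {α χ : ℝ → ℝ} (hαc : Continuous α) (hαsupp : tsupport α ⊆ Set.Ioo 0 1)
    (hαpos : ∀ x, 0 ≤ α x) (hαint : (∫ x : ℝ, α x) = 1)
    (hχ : ∀ x, χ x = ∫ t in Set.Iic x, α t) (x : ℝ) : χ x ≤ 1 := by
  rw [hχ, ← hαint]
  exact setIntegral_le_integral (aux_int hαc hαsupp) (Filter.Eventually.of_forall hαpos)

lemma chi_zero {α χ : ℝ → ℝ} (hαsupp : tsupport α ⊆ Set.Ioo 0 1)
    (hχ : ∀ x, χ x = ∫ t in Set.Iic x, α t) {x : ℝ} (hx : x ≤ 0) : χ x = 0 := by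
  rw [hχ]
  apply setIntegral_eq_zero_of_forall_eq_zero
  intro t ht
  exact aux_zero_nonpos hαsupp (le_trans ht hx)

lemma chi_one {α χ : ℝ → ℝ} (hαc : Continuous α) (hαsupp : tsupport α ⊆ Set.Ioo 0 1)
    (hαint : (∫ x : ℝ, α x) = 1)
    (hχ : ∀ x, χ x = ∫ t in Set.Iic x, α t) {x : ℝ} (hx : 1 ≤ x) : χ x = 1 := by
  have h1 : (∫ t in Set.Ioi x, α t) = 0 := by
    apply setIntegral_eq_zero_of_forall_eq_zero
    intro t ht
    exact aux_zero_ge hαsupp (le_trans hx (le_of_lt ht))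
  have := integral_Iic_add_Ioi (f := α) (b := x) (μ := volume)
    ((aux_int hαc hαsupp).integrableOn) ((aux_int hαc hαsupp).integrableOn)
  rw [hχ]; linarith [hαint]

lemma chi_hasDeriv {α χ : ℝ → ℝ} (hαc : Continuous α) (hαsupp : tsupport α ⊆ Set.Ioo 0 1)
    (hχ : ∀ x, χ x = ∫ t in Set.Iic x, α t) (x : ℝ) : HasDerivAt χ (α x) x := by
  have hint := aux_int hαc hαsupp
  have heq : χ = fun u => (∫ t in Set.Iic (0:ℝ), α t) + ∫ t in (0:ℝ)..u, α t := by
    funext u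
    rw [hχ, ← integral_Iic_sub_Iic hint.integrableOn hint.integrableOn]
    ring
  rw [heq]
  exact ((integral_hasDerivAt_right hint.intervalIntegrable
    (hαc.stronglyMeasurableAtFilter _ _) hαc.continuousAt)).const_add _

lemma aux_ii_congr {f g : ℝ → ℝ} {a b : ℝ} (hfg : ∀ᵐ x, x ∈ Set.uIoc a b → f x = g x)
    (hf : IntervalIntegrable f volume a b) : IntervalIntegrable g volume a b := by
  rw [intervalIntegrable_iff] at *
  exact hf.congr ((ae_restrict_iff' measurableSet_uIoc).mpr hfg)

lemma aux_exp_le {δ : ℝ} (h0 : 0 < δ) (h1 : δ < 1/2) : Real.exp δ ≤ 1 + 2 * δ := by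
  have hse : Real.exp δ * (1 - δ) ≤ 1 := by
    calc Real.exp δ * (1 - δ) ≤ Real.exp δ * Real.exp (-δ) :=
          mul_le_mul_of_nonneg_left (by linarith [Real.add_one_le_exp (-δ)]) (Real.exp_pos δ).le
      _ = 1 := by rw [← Real.exp_add]; simp
  nlinarith [Real.exp_pos δ]

lemma aux_key1 {ε : ℝ} (h0 : 0 ≤ ε) (h1 : ε ≤ 1/2) : 1 ≤ (1 + 8 * ε) * (1 - ε) ^ 2 := by
  nlinarith [mul_nonneg h0 (by linarith : (0:ℝ) ≤ 1 - 2 * ε),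
    mul_nonneg (mul_nonneg h0 h0) (by linarith : (0:ℝ) ≤ 1 - 2 * ε), sq_nonneg ε]

lemma aux_step {t ε : ℝ} (ht : 0 < t) (hkey : 1 ≤ (1 + 8 * ε) * (1 - ε) ^ 2) :
    t ≤ (1 + 8 * ε) * (t * (1 - ε) ^ 2) := by nlinarith

lemma aux_num2 {A B δ w : ℝ} (hB : 0 ≤ B) (hw : 0 ≤ w) (hδ0 : 0 ≤ δ) (hδ1 : δ ≤ 1) :
    (A + B * δ) * (1 + 8 * (δ * w)) ≤ A + (B + 8 * A * w + 8 * B * w) * δ := by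
  nlinarith [mul_nonneg (mul_nonneg hB hw) (mul_nonneg hδ0 (by linarith : (0:ℝ) ≤ 1 - δ))]

set_option maxHeartbeats 2000000 in
/-- for the sharp stratification `ρ_{eq,δ}`, the smallest
Sturm–Liouville eigenvalue `1/c_{1,δ}²` (given by the Rayleigh quotient)
satisfies `1/c_{1,δ}² ≤ 1/c̄² + O(δ)` as `δ → 0`, where
`c̄² = (ρ₊-ρ₋) g (ρ₊/(z₀+1) + ρ₋/(-z₀))⁻¹`. -/
theorem sharp_stratification_rayleigh_upper_bound
    (g ρp ρm z0 : ℝ) (hg : 0 < g) (hρm : 0 < ρm) (hρ : ρm < ρp)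
    (hz0 : z0 ∈ Set.Ioo (-1 : ℝ) 0)
    (α : ℝ → ℝ) (hα : ContDiff ℝ (⊤ : ℕ∞) α) (hαsupp : tsupport α ⊆ Set.Ioo 0 1)
    (hαpos : ∀ x, 0 ≤ α x) (hαint : (∫ x : ℝ, α x) = 1)
    (χ : ℝ → ℝ) (hχ : ∀ x, χ x = ∫ t in Set.Iic x, α t)
    (ρeq : ℝ → ℝ → ℝ)
    (hρeq : ∀ δ z, ρeq δ z = ρp * Real.exp (-δ * z) - (ρp - ρm) * χ ((z - z0) / δ))
    (N2 : ℝ → ℝ → ℝ) (hN2 : ∀ δ z, N2 δ z = -g * deriv (ρeq δ) z / ρeq δ z)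
    -- the set of Rayleigh quotients over piecewise-C¹ (Lipschitz) test functions
    -- vanishing at the endpoints; its infimum is the smallest eigenvalue `1/c_{1,δ}²`:
    (R : ℝ → Set ℝ)
    (hR : ∀ δ, R δ = {r | ∃ f : ℝ → ℝ, (∃ K : NNReal, LipschitzWith K f) ∧
      f (-1) = 0 ∧ f 0 = 0 ∧
      (∫ z in (-1 : ℝ)..0, ρeq δ z * N2 δ z * (f z) ^ 2) ≠ 0 ∧
      r = (∫ z in (-1 : ℝ)..0, ρeq δ z * (deriv f z) ^ 2)
            / (∫ z in (-1 : ℝ)..0, ρeq δ z * N2 δ z * (f z) ^ 2)})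
    (cbar2 : ℝ) (hcbar : cbar2 = (ρp - ρm) * g * (ρp / (z0 + 1) + ρm / (-z0))⁻¹) :
    ∃ C δ0 : ℝ, 0 < C ∧ 0 < δ0 ∧ ∀ δ : ℝ, 0 < δ → δ < δ0 →
      sInf (R δ) ≤ 1 / cbar2 + C * δ := by
  obtain ⟨hz1, hz2⟩ := hz0
  have hαc : Continuous α := hα.continuous
  have hχnn := chi_nonneg hαpos hχ
  have hχle1 := chi_le_one hαc hαsupp hαpos hαint hχ
  have hχ0 : ∀ {x : ℝ}, x ≤ 0 → χ x = 0 := fun hx => chi_zero hαsupp hχ hx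
  have hχ1 : ∀ {x : ℝ}, 1 ≤ x → χ x = 1 := fun hx => chi_one hαc hαsupp hαint hχ hx
  have hχd := chi_hasDeriv hαc hαsupp hχ
  have hχcont : Continuous χ :=
    (Differentiable.continuous (fun x => (hχd x).differentiableAt))
  have hz0p : (0:ℝ) < z0 + 1 := by linarith
  have hz0n : (0:ℝ) < -z0 := by linarith
  have hz0ne : z0 ≠ 0 := by linarith
  have hρpm : (0:ℝ) < ρp - ρm := by linarith
  have hρp : (0:ℝ) < ρp := by linarith
  set s : ℝ := (1 + z0) / z0 with hs
  have hsneg : s < 0 := div_neg_of_pos_of_neg (by linarith) (by linarith)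
  set f : ℝ → ℝ := fun z => min (z + 1) (s * z) with hfdef
  have hf_cont : Continuous f :=
    (continuous_id.add continuous_const).min (continuous_const.mul continuous_id)
  have hdiff : ∀ z : ℝ, s * z - (z + 1) = (z - z0) / z0 := by
    intro z; rw [hs]; field_simp; ring
  have hf_left : ∀ z : ℝ, z ≤ z0 → f z = z + 1 := by
    intro z hz
    have h0 : 0 ≤ (z - z0) / z0 := by
      rw [div_nonneg_iff]; right; exact ⟨by linarith, by linarith⟩
    have := hdiff z
    exact min_eq_left (by linarith)
  have hf_right : ∀ z : ℝ, z0 ≤ z → f z = s * z := by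
    intro z hz
    have h0 : (z - z0) / z0 ≤ 0 := div_nonpos_of_nonneg_of_nonpos (by linarith) (by linarith)
    have := hdiff z
    exact min_eq_right (by linarith)
  have hf_lip : ∃ K : NNReal, LipschitzWith K f := by
    have lip1 : LipschitzWith 1 (fun z : ℝ => z + 1) := by
      apply LipschitzWith.of_dist_le_mul
      intro x y
      simp [Real.dist_eq]
    have lip2 : LipschitzWith ⟨|s|, abs_nonneg s⟩ (fun z : ℝ => s * z) := by
      apply LipschitzWith.of_dist_le_mul
      intro x y
      simp [Real.dist_eq, ← mul_sub, abs_mul]; exact le_rfl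
    exact ⟨_, lip1.min lip2⟩
  have hfm1 : f (-1) = 0 := by
    rw [hf_left (-1) (by linarith)]; ring
  have hf0 : f 0 = 0 := by
    rw [hf_right 0 (by linarith)]; ring
  have hder_lt : ∀ z : ℝ, z < z0 → deriv f z = 1 := by
    intro z hz
    have hev : f =ᶠ[nhds z] (fun y => y + 1) := by
      filter_upwards [Iio_mem_nhds hz] with y hy
      exact hf_left y (le_of_lt hy)
    rw [Filter.EventuallyEq.deriv_eq hev]
    simpa using ((hasDerivAt_id z).add_const (1:ℝ)).deriv
  have hder_gt : ∀ z : ℝ, z0 < z → deriv f z = s := by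
    intro z hz
    have hev : f =ᶠ[nhds z] (fun y => s * y) := by
      filter_upwards [Ioi_mem_nhds hz] with y hy
      exact hf_right y (le_of_lt hy)
    rw [Filter.EventuallyEq.deriv_eq hev]
    simpa using ((hasDerivAt_id z).const_mul s).deriv
  -- constants
  set A : ℝ := ρp * (z0 + 1) + s ^ 2 * (ρm * (-z0)) with hA
  set B : ℝ := 2 * ρp * (z0 + 1) + s ^ 2 * (2 * ρp * (-z0) + (ρp - ρm)) with hB
  set D : ℝ := g * (ρp - ρm) * (z0 + 1) ^ 2 with hD
  have hs2 : (0:ℝ) < s ^ 2 := by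
    rw [pow_two]; exact mul_pos_of_neg_of_neg hsneg hsneg
  have hApos : 0 < A := by
    rw [hA]
    have h1 := mul_pos hρp hz0p
    have h2 := mul_pos hs2 (mul_pos hρm hz0n)
    linarith
  have hBpos : 0 < B := by
    rw [hB]
    have h1 := mul_pos hρp hz0p
    have h2 := mul_pos hs2 (by
      have := mul_pos (mul_pos (by linarith : (0:ℝ) < 2 * ρp) hz0n) hz0n
      have h3 := mul_pos (by linarith : (0:ℝ) < 2 * ρp) hz0n
      linarith : (0:ℝ) < 2 * ρp * -z0 + (ρp - ρm))
    linarith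
  have hDpos : 0 < D := by
    rw [hD]; exact mul_pos (mul_pos hg hρpm) (pow_pos hz0p 2)
  set C : ℝ := (B + 8 * A / (-z0) + 8 * B / (-z0)) / D + 1 with hC
  clear_value s f A B D C
  have hCpos : 0 < C := by
    have h1 : 0 ≤ (B + 8 * A / (-z0) + 8 * B / (-z0)) / D :=
      div_nonneg (by positivity) hDpos.le
    linarith
  refine ⟨C, min (1/2) (-z0/2), hCpos, lt_min (by norm_num) (by linarith), ?_⟩
  intro δ hδ hδlt
  have hδ1 : δ < 1/2 := lt_of_lt_of_le hδlt (min_le_left _ _)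
  have hδ2 : δ < -z0/2 := lt_of_lt_of_le hδlt (min_le_right _ _)
  have hδ0 : δ ≠ 0 := ne_of_gt hδ
  have hδz : z0 + δ < 0 := by linarith
  -- ρeq facts
  have hρfun : ρeq δ = fun z => ρp * Real.exp (-δ * z) - (ρp - ρm) * χ ((z - z0) / δ) :=
    funext (hρeq δ)
  have hρcont : Continuous (ρeq δ) := by
    rw [hρfun]
    exact (continuous_const.mul (Real.continuous_exp.comp
      (continuous_const.mul continuous_id))).sub
      (continuous_const.mul (hχcont.comp ((continuous_id.sub continuous_const).div_const δ)))
  have hρlow : ∀ z ∈ Icc (-1:ℝ) 0, ρm ≤ ρeq δ z := by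
    intro z hz
    rw [hρeq δ z]
    have he : 1 ≤ Real.exp (-δ * z) := Real.one_le_exp (by
      rw [neg_mul]
      exact neg_nonneg.2 (mul_nonpos_iff.2 (Or.inl ⟨hδ.le, hz.2⟩)))
    have h1 : ρp * 1 ≤ ρp * Real.exp (-δ * z) := mul_le_mul_of_nonneg_left he hρp.le
    have h2 : (ρp - ρm) * χ ((z - z0) / δ) ≤ (ρp - ρm) * 1 :=
      mul_le_mul_of_nonneg_left (hχle1 _) hρpm.le
    linarith
  have hexp2δ : Real.exp δ ≤ 1 + 2 * δ := aux_exp_le hδ hδ1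
  have hexpub : ∀ z ∈ Icc (-1:ℝ) 0, Real.exp (-δ * z) ≤ 1 + 2 * δ := by
    intro z hz
    calc Real.exp (-δ * z) ≤ Real.exp δ := Real.exp_le_exp.2 (by
      have h := mul_le_mul_of_nonneg_left hz.1 hδ.le
      rw [neg_mul]
      linarith)
      _ ≤ 1 + 2 * δ := hexp2δ
  have hρub : ∀ z ∈ Icc (-1:ℝ) 0, ρeq δ z ≤ ρp * (1 + 2 * δ) := by
    intro z hz
    rw [hρeq δ z]
    have h1 : ρp * Real.exp (-δ * z) ≤ ρp * (1 + 2 * δ) :=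
      mul_le_mul_of_nonneg_left (hexpub z hz) hρp.le
    have h2 : 0 ≤ (ρp - ρm) * χ ((z - z0) / δ) := mul_nonneg hρpm.le (hχnn _)
    linarith
  -- derivative of ρeq
  have hρder : ∀ z, HasDerivAt (ρeq δ)
      (ρp * (Real.exp (-δ * z) * -δ) - (ρp - ρm) * (α ((z - z0) / δ) * (1 / δ))) z := by
    intro z
    rw [hρfun]
    have e1 : HasDerivAt (fun y : ℝ => -δ * y) (-δ) z := by
      simpa using (hasDerivAt_id z).const_mul (-δ)
    have e2 : HasDerivAt (fun y : ℝ => ρp * Real.exp (-δ * y))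
        (ρp * (Real.exp (-δ * z) * -δ)) z := (e1.exp).const_mul ρp
    have e3 : HasDerivAt (fun y : ℝ => (y - z0) / δ) (1 / δ) z := by
      simpa using ((hasDerivAt_id z).sub_const z0).div_const δ
    have e4' := HasDerivAt.comp z (hχd ((z - z0) / δ)) e3
    have e4 : HasDerivAt (fun y : ℝ => χ ((y - z0) / δ)) (α ((z - z0) / δ) * (1 / δ)) z := by
      exact e4'
    exact e2.sub (e4.const_mul (ρp - ρm))
  have hρder' : ∀ z, deriv (ρeq δ) z
      = ρp * (Real.exp (-δ * z) * -δ) - (ρp - ρm) * (α ((z - z0) / δ) * (1 / δ)) :=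
    fun z => (hρder z).deriv
  have hderρ_nonpos : ∀ z, deriv (ρeq δ) z ≤ 0 := by
    intro z
    rw [hρder' z]
    have h1 : 0 ≤ ρp * (Real.exp (-δ * z) * δ) :=
      mul_nonneg hρp.le (mul_nonneg (Real.exp_pos _).le hδ.le)
    have h2 : 0 ≤ (ρp - ρm) * (α ((z - z0) / δ) * (1 / δ)) :=
      mul_nonneg hρpm.le (mul_nonneg (hαpos _) (by positivity))
    have h3 : ρp * (Real.exp (-δ * z) * -δ) = -(ρp * (Real.exp (-δ * z) * δ)) := by ring
    linarith [h3.le]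
  -- basic positivity / continuity facts
  have hρpos : ∀ z ∈ Icc (-1:ℝ) 0, 0 < ρeq δ z := fun z hz => lt_of_lt_of_le hρm (hρlow z hz)
  have hcα : Continuous (fun z : ℝ => α ((z - z0) / δ)) :=
    hαc.comp ((continuous_id.sub continuous_const).div_const δ)
  have hcexp : Continuous (fun z : ℝ => Real.exp (-δ * z)) :=
    Real.continuous_exp.comp (continuous_const.mul continuous_id)
  have hχc2 : Continuous (fun z : ℝ => χ ((z - z0) / δ)) :=
    hχcont.comp ((continuous_id.sub continuous_const).div_const δ)
  have hcJ : Continuous (fun z : ℝ => α ((z - z0) / δ) * (f z) ^ 2) := hcα.mul (hf_cont.pow 2)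
  have hG1c : Continuous (fun z : ℝ => (g * δ * ρp * Real.exp (-δ * z)) * (f z) ^ 2) :=
    (continuous_const.mul hcexp).mul (hf_cont.pow 2)
  have hG2c : Continuous (fun z : ℝ => (g * (ρp - ρm) / δ) * (α ((z - z0) / δ) * (f z) ^ 2)) :=
    continuous_const.mul hcJ
  have hsupp01 : Function.support α ⊆ Ioc 0 1 :=
    (subset_tsupport α).trans (hαsupp.trans Ioo_subset_Ioc_self)
  -- rewrite the denominator
  have hDen_eq : (∫ z in (-1:ℝ)..0, ρeq δ z * N2 δ z * (f z) ^ 2)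
      = (∫ z in (-1:ℝ)..0, (g * δ * ρp * Real.exp (-δ * z)) * (f z) ^ 2)
        + ∫ z in (-1:ℝ)..0, (g * (ρp - ρm) / δ) * (α ((z - z0) / δ) * (f z) ^ 2) := by
    rw [← intervalIntegral.integral_add (hG1c.intervalIntegrable _ _)
      (hG2c.intervalIntegrable _ _)]
    apply intervalIntegral.integral_congr
    intro z hz
    rw [uIcc_of_le (by norm_num : (-1:ℝ) ≤ 0)] at hz
    have hne : ρeq δ z ≠ 0 := ne_of_gt (hρpos z hz)
    dsimp only
    rw [hN2 δ z, hρder' z]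
    field_simp
    ring
  have hI1 : 0 ≤ ∫ z in (-1:ℝ)..0, (g * δ * ρp * Real.exp (-δ * z)) * (f z) ^ 2 :=
    intervalIntegral.integral_nonneg (by norm_num) (fun u _ =>
      mul_nonneg (mul_nonneg (mul_nonneg (mul_nonneg hg.le hδ.le) hρp.le)
        (Real.exp_pos _).le) (sq_nonneg _))
  -- split the α-integral
  have hJ_split : (∫ z in (-1:ℝ)..0, α ((z - z0) / δ) * (f z) ^ 2)
      = (∫ z in (-1:ℝ)..z0, α ((z - z0) / δ) * (f z) ^ 2)
        + ((∫ z in z0..(z0+δ), α ((z - z0) / δ) * (f z) ^ 2)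
        + ∫ z in (z0+δ)..(0:ℝ), α ((z - z0) / δ) * (f z) ^ 2) := by
    rw [integral_add_adjacent_intervals (hcJ.intervalIntegrable _ _)
        (hcJ.intervalIntegrable _ _),
      integral_add_adjacent_intervals (hcJ.intervalIntegrable _ _)
        (hcJ.intervalIntegrable _ _)]
  have hJ1 : (∫ z in (-1:ℝ)..z0, α ((z - z0) / δ) * (f z) ^ 2) = 0 := by
    have heq : EqOn (fun z => α ((z - z0) / δ) * (f z) ^ 2) (fun _ => (0:ℝ)) (uIcc (-1) z0) := by
      intro z hz
      rw [uIcc_of_le (by linarith : (-1:ℝ) ≤ z0)] at hz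
      have hα0 : α ((z - z0) / δ) = 0 := aux_zero_nonpos hαsupp
        (by rw [div_nonpos_iff]; right; exact ⟨by linarith [hz.2], hδ.le⟩)
      simp [hα0]
    rw [intervalIntegral.integral_congr heq]
    simp
  have hJ3 : (∫ z in (z0+δ)..(0:ℝ), α ((z - z0) / δ) * (f z) ^ 2) = 0 := by
    have heq : EqOn (fun z => α ((z - z0) / δ) * (f z) ^ 2) (fun _ => (0:ℝ))
        (uIcc (z0+δ) 0) := by
      intro z hz
      rw [uIcc_of_le (by linarith : z0+δ ≤ (0:ℝ))] at hz
      have hα0 : α ((z - z0) / δ) = 0 := aux_zero_ge hαsupp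
        ((le_div_iff₀ hδ).mpr (by linarith [hz.1]))
      simp [hα0]
    rw [intervalIntegral.integral_congr heq]
    simp
  have hmpos : 0 < s * (z0 + δ) := mul_pos_of_neg_of_neg hsneg hδz
  have hfm : ∀ z ∈ Icc z0 (z0 + δ), s * (z0 + δ) ≤ f z := by
    intro z hz
    rw [hf_right z hz.1]
    exact mul_le_mul_of_nonpos_left hz.2 hsneg.le
  have hJ2 : (s * (z0+δ)) ^ 2 * δ ≤ ∫ z in z0..(z0+δ), α ((z - z0) / δ) * (f z) ^ 2 := by
    have hmono : (∫ z in z0..(z0+δ), α ((z - z0) / δ) * (s * (z0+δ)) ^ 2)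
        ≤ ∫ z in z0..(z0+δ), α ((z - z0) / δ) * (f z) ^ 2 := by
      apply intervalIntegral.integral_mono_on (by linarith)
        ((hcα.mul continuous_const).intervalIntegrable _ _) (hcJ.intervalIntegrable _ _)
      intro z hz
      have h1 : (s * (z0+δ)) ^ 2 ≤ (f z) ^ 2 :=
        pow_le_pow_left₀ hmpos.le (hfm z hz) 2
      exact mul_le_mul_of_nonneg_left h1 (hαpos _)
    have hval : (∫ z in z0..(z0+δ), α ((z - z0) / δ) * (s * (z0+δ)) ^ 2)
        = (s * (z0+δ)) ^ 2 * δ := by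
      have h1 := intervalIntegral.integral_comp_sub_right (a := z0) (b := z0+δ)
        (fun u => α (u / δ) * (s * (z0+δ)) ^ 2) z0
      simp only [add_sub_cancel_left, sub_self] at h1
      rw [h1]
      have h2 := intervalIntegral.integral_comp_div (a := (0:ℝ)) (b := δ)
        (fun u => α u * (s * (z0+δ)) ^ 2) hδ0
      rw [zero_div, div_self hδ0] at h2
      rw [h2, intervalIntegral.integral_mul_const,
        intervalIntegral.integral_eq_integral_of_support_subset hsupp01, hαint,
        smul_eq_mul]
      ring
    linarith
  have hJ_ge : (s * (z0+δ)) ^ 2 * δ ≤ ∫ z in (-1:ℝ)..0, α ((z - z0) / δ) * (f z) ^ 2 := by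
    rw [hJ_split, hJ1, hJ3]
    linarith
  have hgm2pos : 0 < g * (ρp - ρm) * (s * (z0+δ)) ^ 2 :=
    mul_pos (mul_pos hg hρpm) (pow_pos hmpos 2)
  have hDen_lb : g * (ρp - ρm) * (s * (z0+δ)) ^ 2
      ≤ ∫ z in (-1:ℝ)..0, ρeq δ z * N2 δ z * (f z) ^ 2 := by
    rw [hDen_eq]
    have h2 : (∫ z in (-1:ℝ)..0, (g * (ρp - ρm) / δ) * (α ((z - z0) / δ) * (f z) ^ 2))
        = (g * (ρp - ρm) / δ) * ∫ z in (-1:ℝ)..0, α ((z - z0) / δ) * (f z) ^ 2 :=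
      intervalIntegral.integral_const_mul _ _
    have h3 : (g * (ρp - ρm) / δ) * ((s * (z0+δ)) ^ 2 * δ)
        ≤ (g * (ρp - ρm) / δ) * ∫ z in (-1:ℝ)..0, α ((z - z0) / δ) * (f z) ^ 2 :=
      mul_le_mul_of_nonneg_left hJ_ge (div_nonneg (mul_nonneg hg.le hρpm.le) hδ.le)
    have h4 : (g * (ρp - ρm) / δ) * ((s * (z0+δ)) ^ 2 * δ)
        = g * (ρp - ρm) * (s * (z0+δ)) ^ 2 := by
      field_simp
    rw [h2]
    linarith
  have hDen_pos : 0 < ∫ z in (-1:ℝ)..0, ρeq δ z * N2 δ z * (f z) ^ 2 :=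
    lt_of_lt_of_le hgm2pos hDen_lb
  -- numerator
  have hae_ne : ∀ᵐ x : ℝ, x ≠ z0 := by
    rw [ae_iff]
    simpa using Real.volume_singleton
  have hFi_L : IntervalIntegrable (fun z => ρeq δ z * (deriv f z) ^ 2) volume (-1) z0 := by
    apply aux_ii_congr ?_ (hρcont.intervalIntegrable _ _)
    filter_upwards [hae_ne] with x hx hxI
    rw [uIoc_of_le (by linarith : (-1:ℝ) ≤ z0)] at hxI
    rw [hder_lt x (lt_of_le_of_ne hxI.2 hx)]
    ring
  have hFi_R : IntervalIntegrable (fun z => ρeq δ z * (deriv f z) ^ 2) volume z0 0 := by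
    have hctmp : IntervalIntegrable (fun z => ρeq δ z * s ^ 2) volume z0 0 :=
      ((hρcont.mul continuous_const).intervalIntegrable _ _)
    refine aux_ii_congr ?_ hctmp
    apply Filter.Eventually.of_forall
    intro x hxI
    rw [uIoc_of_le hz2.le] at hxI
    rw [hder_gt x hxI.1]
  have hNum_split : (∫ z in (-1:ℝ)..0, ρeq δ z * (deriv f z) ^ 2)
      = (∫ z in (-1:ℝ)..z0, ρeq δ z) + s ^ 2 * ∫ z in z0..(0:ℝ), ρeq δ z := by
    rw [← integral_add_adjacent_intervals hFi_L hFi_R]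
    congr 1
    · apply intervalIntegral.integral_congr_ae
      filter_upwards [hae_ne] with x hx hxI
      rw [uIoc_of_le (by linarith : (-1:ℝ) ≤ z0)] at hxI
      rw [hder_lt x (lt_of_le_of_ne hxI.2 hx)]
      ring
    · rw [← intervalIntegral.integral_const_mul]
      apply intervalIntegral.integral_congr_ae
      apply Filter.Eventually.of_forall
      intro x hxI
      rw [uIoc_of_le hz2.le] at hxI
      rw [hder_gt x hxI.1]
      ring
  have hNL : (∫ z in (-1:ℝ)..z0, ρeq δ z) ≤ (z0+1) * (ρp * (1 + 2*δ)) := by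
    have h := intervalIntegral.integral_mono_on (by linarith : (-1:ℝ) ≤ z0)
      (hρcont.intervalIntegrable _ _) (intervalIntegrable_const (μ := volume))
      (fun z hz => hρub z ⟨hz.1, by linarith [hz.2]⟩)
    rw [intervalIntegral.integral_const, smul_eq_mul] at h
    linarith [h]
  have hNR : (∫ z in z0..(0:ℝ), ρeq δ z)
      ≤ (-z0) * (ρp * (1 + 2*δ)) - (ρp - ρm) * ((-z0) - δ) := by
    have hsplit : (∫ z in z0..(0:ℝ), ρeq δ z)
        = (∫ z in z0..(0:ℝ), ρp * Real.exp (-δ * z))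
          - (ρp - ρm) * ∫ z in z0..(0:ℝ), χ ((z - z0) / δ) := by
      rw [← intervalIntegral.integral_const_mul, ← intervalIntegral.integral_sub
        (show IntervalIntegrable (fun z => ρp * Real.exp (-δ * z)) volume z0 0 from
          (continuous_const.mul hcexp).intervalIntegrable _ _)
        (show IntervalIntegrable (fun z => (ρp - ρm) * χ ((z - z0) / δ)) volume z0 0 from
          (continuous_const.mul hχc2).intervalIntegrable _ _)]
      apply intervalIntegral.integral_congr
      intro z hz
      exact hρeq δ z
    have h1 : (∫ z in z0..(0:ℝ), ρp * Real.exp (-δ * z)) ≤ (-z0) * (ρp * (1 + 2*δ)) := by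
      have h := intervalIntegral.integral_mono_on hz2.le
        (show IntervalIntegrable (fun z => ρp * Real.exp (-δ * z)) volume z0 0 from
          (continuous_const.mul hcexp).intervalIntegrable _ _)
        (intervalIntegrable_const (μ := volume))
        (fun z hz => mul_le_mul_of_nonneg_left (hexpub z ⟨by linarith [hz.1], hz.2⟩) hρp.le)
      rw [intervalIntegral.integral_const, smul_eq_mul] at h
      linarith [h]
    have h2 : ((-z0) - δ) ≤ ∫ z in z0..(0:ℝ), χ ((z - z0) / δ) := by
      rw [← integral_add_adjacent_intervals (a := z0) (b := z0+δ) (c := (0:ℝ))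
        (hχc2.intervalIntegrable _ _) (hχc2.intervalIntegrable _ _)]
      have h2a : 0 ≤ ∫ z in z0..(z0+δ), χ ((z - z0) / δ) :=
        intervalIntegral.integral_nonneg (by linarith) (fun u _ => hχnn _)
      have h2b : (∫ z in (z0+δ)..(0:ℝ), χ ((z - z0) / δ)) = (-z0) - δ := by
        rw [intervalIntegral.integral_congr (g := fun _ => (1:ℝ)) ?_]
        · rw [intervalIntegral.integral_const, smul_eq_mul]
          ring
        · intro z hz
          rw [uIcc_of_le (by linarith : z0+δ ≤ (0:ℝ))] at hz
          exact hχ1 ((le_div_iff₀ hδ).mpr (by linarith [hz.1]))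
      linarith
    have h3 : (ρp - ρm) * ((-z0) - δ) ≤ (ρp - ρm) * ∫ z in z0..(0:ℝ), χ ((z - z0) / δ) :=
      mul_le_mul_of_nonneg_left h2 hρpm.le
    rw [hsplit]
    linarith
  have hNum_ub : (∫ z in (-1:ℝ)..0, ρeq δ z * (deriv f z) ^ 2) ≤ A + B * δ := by
    rw [hNum_split]
    have h4 : s ^ 2 * (∫ z in z0..(0:ℝ), ρeq δ z)
        ≤ s ^ 2 * ((-z0) * (ρp * (1 + 2*δ)) - (ρp - ρm) * ((-z0) - δ)) :=
      mul_le_mul_of_nonneg_left hNR (sq_nonneg s)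
    have h5 : (z0+1) * (ρp * (1 + 2*δ))
        + s ^ 2 * ((-z0) * (ρp * (1 + 2*δ)) - (ρp - ρm) * ((-z0) - δ)) = A + B * δ := by
      rw [hA, hB]
      ring
    linarith
  have hNum_nonneg : 0 ≤ ∫ z in (-1:ℝ)..0, ρeq δ z * (deriv f z) ^ 2 :=
    intervalIntegral.integral_nonneg (by norm_num) (fun u hu =>
      mul_nonneg (le_trans hρm.le (hρlow u hu)) (sq_nonneg _))
  -- membership and lower-boundedness
  have hDen_ne : (∫ z in (-1:ℝ)..0, ρeq δ z * N2 δ z * (f z) ^ 2) ≠ 0 := ne_of_gt hDen_pos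
  have hmem : ((∫ z in (-1:ℝ)..0, ρeq δ z * (deriv f z) ^ 2)
      / (∫ z in (-1:ℝ)..0, ρeq δ z * N2 δ z * (f z) ^ 2)) ∈ R δ := by
    rw [hR δ]
    exact ⟨f, hf_lip, hfm1, hf0, hDen_ne, rfl⟩
  have hbdd : BddBelow (R δ) := by
    refine ⟨0, fun r hr => ?_⟩
    rw [hR δ] at hr
    obtain ⟨f', hK, h1, h0, hdn, hreq⟩ := hr
    have hnum' : 0 ≤ ∫ z in (-1:ℝ)..0, ρeq δ z * (deriv f' z) ^ 2 :=
      intervalIntegral.integral_nonneg (by norm_num) (fun u hu =>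
        mul_nonneg (le_trans hρm.le (hρlow u hu)) (sq_nonneg _))
    have hden' : 0 ≤ ∫ z in (-1:ℝ)..0, ρeq δ z * N2 δ z * (f' z) ^ 2 := by
      apply intervalIntegral.integral_nonneg (by norm_num)
      intro u hu
      have hρu : 0 < ρeq δ u := hρpos u hu
      have hN2u : 0 ≤ N2 δ u := by
        rw [hN2 δ u]
        apply div_nonneg _ hρu.le
        exact neg_nonneg.2 (mul_nonpos_iff.2 (Or.inl ⟨hg.le, hderρ_nonpos u⟩)) |>.trans_eq
          (by rw [neg_mul])
      exact mul_nonneg (mul_nonneg hρu.le hN2u) (sq_nonneg _)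
    rw [hreq]
    exact div_nonneg hnum' hden'
  -- final estimates
  have hABδ : 0 ≤ A + B * δ :=
    add_nonneg hApos.le (mul_nonneg hBpos.le hδ.le)
  have step1 : ((∫ z in (-1:ℝ)..0, ρeq δ z * (deriv f z) ^ 2)
        / (∫ z in (-1:ℝ)..0, ρeq δ z * N2 δ z * (f z) ^ 2))
      ≤ (A + B * δ) / (g * (ρp - ρm) * (s * (z0+δ)) ^ 2) :=
    div_le_div₀ hABδ hNum_ub hgm2pos hDen_lb
  have hm2eq : g * (ρp - ρm) * (s * (z0+δ)) ^ 2
      = g * (ρp - ρm) * (z0+1) ^ 2 * (1 - δ / (-z0)) ^ 2 := by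
    rw [hs]
    field_simp
    ring
  have hε0 : 0 ≤ δ / (-z0) := div_nonneg hδ.le hz0n.le
  have hε1 : δ / (-z0) ≤ 1/2 := by
    rw [div_le_iff₀ hz0n]
    linarith
  have hkey := aux_key1 hε0 hε1
  have hstep : D ≤ (1 + 8 * (δ / (-z0))) * (g * (ρp - ρm) * (s * (z0+δ)) ^ 2) := by
    rw [hm2eq, hD]
    have ht : 0 < g * (ρp - ρm) * (z0+1) ^ 2 := mul_pos (mul_pos hg hρpm) (pow_pos hz0p 2)
    exact aux_step ht hkey
  have hinv : 1 / (g * (ρp - ρm) * (s * (z0+δ)) ^ 2) ≤ (1 + 8 * (δ / (-z0))) / D := by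
    rw [div_le_div_iff₀ hgm2pos hDpos]
    linarith
  have hq1 : (A + B * δ) / (g * (ρp - ρm) * (s * (z0+δ)) ^ 2)
      ≤ (A + B * δ) * ((1 + 8 * (δ / (-z0))) / D) := by
    rw [div_eq_mul_one_div]
    exact mul_le_mul_of_nonneg_left hinv hABδ
  have hnum2 : (A + B * δ) * (1 + 8 * (δ / (-z0)))
      ≤ A + (B + 8 * A / (-z0) + 8 * B / (-z0)) * δ := by
    have h := aux_num2 (A := A) (B := B) (δ := δ) (w := (-z0)⁻¹) hBpos.le
      (inv_nonneg.2 hz0n.le) hδ.le (by linarith)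
    have e1 : δ / (-z0) = δ * (-z0)⁻¹ := div_eq_mul_inv _ _
    have e2 : 8 * A / (-z0) = 8 * A * (-z0)⁻¹ := div_eq_mul_inv _ _
    have e3 : 8 * B / (-z0) = 8 * B * (-z0)⁻¹ := div_eq_mul_inv _ _
    rw [e1, e2, e3]
    exact h
  have hq2 : (A + B * δ) * ((1 + 8 * (δ / (-z0))) / D)
      ≤ (A + (B + 8 * A / (-z0) + 8 * B / (-z0)) * δ) / D := by
    have e : (A + B * δ) * ((1 + 8 * (δ / (-z0))) / D)
        = ((A + B * δ) * (1 + 8 * (δ / (-z0)))) / D := by ring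
    rw [e]
    exact div_le_div_of_nonneg_right hnum2 hDpos.le
  have hq3 : (A + (B + 8 * A / (-z0) + 8 * B / (-z0)) * δ) / D ≤ A / D + C * δ := by
    rw [add_div]
    have he1 : ((B + 8 * A / (-z0) + 8 * B / (-z0)) * δ) / D
        = ((B + 8 * A / (-z0) + 8 * B / (-z0)) / D) * δ := by ring
    rw [he1]
    have he2 : ((B + 8 * A / (-z0) + 8 * B / (-z0)) / D) * δ ≤ C * δ :=
      mul_le_mul_of_nonneg_right (by rw [hC]; linarith) hδ.le
    linarith
  have hAD : A / D = 1 / cbar2 := by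
    rw [hA, hD, hcbar, hs]
    have hQpos : 0 < ρp / (z0+1) + ρm / (-z0) :=
      add_pos (div_pos hρp hz0p) (div_pos hρm hz0n)
    have hQ : ρp / (z0+1) + ρm / (-z0) ≠ 0 := ne_of_gt hQpos
    field_simp
    ring
  calc sInf (R δ) ≤ (∫ z in (-1:ℝ)..0, ρeq δ z * (deriv f z) ^ 2)
        / (∫ z in (-1:ℝ)..0, ρeq δ z * N2 δ z * (f z) ^ 2) := csInf_le hbdd hmem
    _ ≤ (A + B * δ) / (g * (ρp - ρm) * (s * (z0+δ)) ^ 2) := step1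
    _ ≤ (A + B * δ) * ((1 + 8 * (δ / (-z0))) / D) := hq1
    _ ≤ (A + (B + 8 * A / (-z0) + 8 * B / (-z0)) * δ) / D := hq2
    _ ≤ A / D + C * δ := hq3
    _ = 1 / cbar2 + C * δ := by rw [hAD]
end
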